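/- Let g be a balanced n-variable Boolean function, b ∈ F_2, and suppose there is an integer t ≥ 0 with t ≡ b (mod 2) such that g is plateaued and t-resilient but not (t+1)-resilient. Let g_b be the (n+1)-variable Boolean function g_b(X_{n+1}, X_n, …, X_1) = (1 ⊕ X_{n+1})·g(X_n, …, X_1) ⊕ X_{n+1}·(b ⊕ g(1⊕X_n, …, 1⊕X_1)), and let G_b = g_b ⋄ g. Then H_∞(G_b)/Inf(G_b) ≥ H_∞(g)/Inf(g) if and only if t + 3 ≥ Inf(g) + ε_b(g), where ε_b(g) = Σ_{α ∈ F_2^n : wt(α) ≢ b (mod 2)} W_g(α)². -/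

import Mathlib

open Finset

/-- Interpret a bit as a natural number. -/
def b2n (b : Bool) : ℕ := if b then 1 else 0

/-- Hamming weight of a vector in `F_2^ι`. -/
def bwt {ι : Type*} [Fintype ι] (α : ι → Bool) : ℕ :=
  (Finset.univ.filter fun i => α i = true).card

/-- Inner product `⟨v,w⟩ = v_1 w_1 ⊕ ⋯ ⊕ v_n w_n` over `F_2`. -/
def bip {ι : Type*} [Fintype ι] (v w : ι → Bool) : Bool :=
  decide ((∑ i, b2n (v i && w i)) % 2 = 1)

/-- Normalised Walsh transform of a Boolean function:
`W_f(α) = 2^{-n} Σ_x (-1)^{f(x) ⊕ ⟨x,α⟩}`. -/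
noncomputable def walsh {ι : Type*} [Fintype ι] [DecidableEq ι]
    (f : (ι → Bool) → Bool) (α : ι → Bool) : ℝ :=
  (2 ^ Fintype.card ι : ℝ)⁻¹ *
    ∑ x : ι → Bool, (-1 : ℝ) ^ (b2n (f x) + ∑ i, b2n (x i && α i))

/-- Fourier min-entropy `H_∞(f) = min_{α : W_f(α) ≠ 0} log₂ (1 / W_f(α)²)`. -/
noncomputable def minEntropy {ι : Type*} [Fintype ι] [DecidableEq ι]
    (f : (ι → Bool) → Bool) : ℝ :=
  sInf {y : ℝ | ∃ α : ι → Bool, walsh f α ≠ 0 ∧ y = Real.logb 2 (1 / (walsh f α) ^ 2)}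

/-- Fourier entropy `H(f) = Σ_{α : W_f(α) ≠ 0} W_f(α)² log₂ (1 / W_f(α)²)`. -/
noncomputable def fourierEntropy {ι : Type*} [Fintype ι] [DecidableEq ι]
    (f : (ι → Bool) → Bool) : ℝ :=
  ∑ α : ι → Bool,
    if walsh f α = 0 then 0
    else (walsh f α) ^ 2 * Real.logb 2 (1 / (walsh f α) ^ 2)

/-- Total influence `Inf(f) = Σ_i Pr_x [f(x) ≠ f(x ⊕ e_i)]`. -/
noncomputable def influence {ι : Type*} [Fintype ι] [DecidableEq ι]
    (f : (ι → Bool) → Bool) : ℝ :=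
  ∑ i : ι,
    ((Finset.univ.filter fun x : ι → Bool =>
       f x ≠ f (Function.update x i (!x i))).card : ℝ) / 2 ^ Fintype.card ι

/-- `f` is balanced if `|supp(f)| = 2^{n-1}`. -/
def balanced {ι : Type*} [Fintype ι] [DecidableEq ι] (f : (ι → Bool) → Bool) : Prop :=
  (Finset.univ.filter fun x : ι → Bool => f x = true).card = 2 ^ (Fintype.card ι - 1)

/-- Disjoint composition `(f ⋄ g)(x) = f(g(x^{(1)}), …, g(x^{(k)}))`, where the input in
`F_2^{k·l}` is viewed as `k` blocks of length `l`. -/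
def disjComp {ι κ : Type*} (f : (ι → Bool) → Bool) (g : (κ → Bool) → Bool) :
    (ι × κ → Bool) → Bool :=
  fun x => f fun i => g fun j => x (i, j)

/-- The palindromic-type construction
`g_b(X_{n+1}, X_n, …, X_1) = (1 ⊕ X_{n+1})·g(X_n,…,X_1) ⊕ X_{n+1}·(b ⊕ g(1⊕X_n,…,1⊕X_1))`,
where the extra variable `X_{n+1}` is placed at index `0`. -/
def palin {n : ℕ} (g : (Fin n → Bool) → Bool) (b : Bool) :
    (Fin (n + 1) → Bool) → Bool :=
  fun x => if x 0 = true then xor b (g fun i => !x i.succ) else g fun i => x i.succ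

/-- `ε_b(g) = Σ_{α : wt(α) ≢ b (mod 2)} W_g(α)²`. -/
noncomputable def eps {n : ℕ} (g : (Fin n → Bool) → Bool) (b : Bool) : ℝ :=
  ∑ α ∈ Finset.univ.filter fun α : Fin n → Bool => ¬bwt α % 2 = b2n b, (walsh g α) ^ 2

/-- `f` is `t`-resilient if `W_f(α) = 0` whenever `wt(α) ≤ t`. -/
def resilient {ι : Type*} [Fintype ι] [DecidableEq ι]
    (f : (ι → Bool) → Bool) (t : ℕ) : Prop :=
  ∀ α : ι → Bool, bwt α ≤ t → walsh f α = 0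

/-- `f` is plateaued if its Walsh transform takes values in `{0, c, -c}` for some `c`. -/
def plateaued {ι : Type*} [Fintype ι] [DecidableEq ι] (f : (ι → Bool) → Bool) : Prop :=
  ∃ c : ℝ, ∀ α : ι → Bool, walsh f α = 0 ∨ walsh f α = c ∨ walsh f α = -c

/-- `a_i = max_{w : wt(w) = i} W_f(w)²`. -/
noncomputable def maxWsqAt {ι : Type*} [Fintype ι] [DecidableEq ι]
    (f : (ι → Bool) → Bool) (i : ℕ) : ℝ :=
  sSup {z : ℝ | ∃ w : ι → Bool, bwt w = i ∧ z = (walsh f w) ^ 2}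

/-- Index type for the O'Donnell–Tan recursion: `f_m` is a function of `l^{m+1}` variables. -/
def OTIndex (l : ℕ) : ℕ → Type
  | 0 => Fin l
  | m + 1 => Fin l × OTIndex l m

instance OTIndex.instFintype (l : ℕ) : (m : ℕ) → Fintype (OTIndex l m)
  | 0 => inferInstanceAs (Fintype (Fin l))
  | m + 1 => letI := OTIndex.instFintype l m
             inferInstanceAs (Fintype (Fin l × OTIndex l m))

instance OTIndex.instDecidableEq (l : ℕ) : (m : ℕ) → DecidableEq (OTIndex l m)
  | 0 => inferInstanceAs (DecidableEq (Fin l))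
  | m + 1 => letI := OTIndex.instDecidableEq l m
             inferInstanceAs (DecidableEq (Fin l × OTIndex l m))

/-- The O'Donnell–Tan recursion `f_0 = g`, `f_m = g ⋄ f_{m-1}`. -/
def OTfun {l : ℕ} (g : (Fin l → Bool) → Bool) : (m : ℕ) → (OTIndex l m → Bool) → Bool
  | 0 => g
  | m + 1 => disjComp g (OTfun g m)

namespace S15
open Finset

noncomputable def sg (b : Bool) : ℝ := if b then -1 else 1

lemma sg_mul_self (b : Bool) : sg b * sg b = 1 := by cases b <;> norm_num [sg]

lemma sg_ne_zero (b : Bool) : sg b ≠ 0 := by cases b <;> norm_num [sg]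

lemma neg_one_pow_b2n (b : Bool) : (-1 : ℝ) ^ (b2n b) = sg b := by
  cases b <;> simp [b2n, sg]

lemma sg_xor (a b : Bool) : sg (xor a b) = sg a * sg b := by
  cases a <;> cases b <;> norm_num [sg]

variable {ι : Type*} [Fintype ι] [DecidableEq ι]

noncomputable def chi (x α : ι → Bool) : ℝ := ∏ i, sg (x i && α i)

lemma chi_comm (x α : ι → Bool) : chi x α = chi α x :=
  Finset.prod_congr rfl fun i _ => by rw [Bool.and_comm]

lemma walsh_eq (f : (ι → Bool) → Bool) (α : ι → Bool) :
    walsh f α = (2 ^ Fintype.card ι : ℝ)⁻¹ * ∑ x, sg (f x) * chi x α := by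
  unfold walsh chi
  congr 1
  refine Finset.sum_congr rfl fun x _ => ?_
  rw [pow_add, neg_one_pow_b2n, ← Finset.prod_pow_eq_pow_sum]
  congr 1
  exact Finset.prod_congr rfl fun i _ => neg_one_pow_b2n _

lemma sum_sg_chi (f : (ι → Bool) → Bool) (α : ι → Bool) :
    ∑ x, sg (f x) * chi x α = 2 ^ Fintype.card ι * walsh f α := by
  rw [walsh_eq]
  have : (2 : ℝ) ^ Fintype.card ι ≠ 0 := by positivity
  field_simp

lemma sum_prod_eq {Z : Type*} [Fintype Z] (p : ι → Z → ℝ) :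
    ∑ A : ι → Z, ∏ i, p i (A i) = ∏ i, ∑ z, p i z :=
  (Fintype.prod_sum p).symm

lemma sg_and_xor (a b c : Bool) : sg (a && b) * sg (a && c) = sg (a && xor b c) := by
  cases a <;> cases b <;> cases c <;> norm_num [sg]

lemma chi_mul_chi (x α β : ι → Bool) :
    chi x α * chi x β = chi x (fun i => xor (α i) (β i)) := by
  unfold chi
  rw [← Finset.prod_mul_distrib]
  exact Finset.prod_congr rfl fun i _ => sg_and_xor _ _ _

lemma sum_chi (γ : ι → Bool) :
    ∑ x : ι → Bool, chi x γ =
      if γ = (fun _ => false) then (2 : ℝ) ^ Fintype.card ι else 0 := by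
  unfold chi
  rw [sum_prod_eq fun i b => sg (b && γ i)]
  split_ifs with h
  · subst h
    simp [sg, Fintype.card_congr, Finset.card_univ]
  · obtain ⟨i, hi⟩ : ∃ i, γ i = true := by
      by_contra hc
      push_neg at hc
      exact h (funext fun i => by simpa using hc i)
    refine Finset.prod_eq_zero (Finset.mem_univ i) ?_
    rw [Fintype.sum_bool, hi]
    norm_num [sg]

lemma sum_chi_mul_chi (α β : ι → Bool) :
    ∑ x : ι → Bool, chi x α * chi x β =
      if α = β then (2 : ℝ) ^ Fintype.card ι else 0 := by
  simp_rw [chi_mul_chi]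
  rw [sum_chi]
  congr 1
  simp only [eq_iff_iff]
  constructor
  · intro h
    funext i
    have h2 : xor (α i) (β i) = false := congrFun h i
    cases hai : α i <;> cases hbi : β i <;> simp_all
  · rintro rfl
    funext i
    simp

lemma sum_walsh_chi (f : (ι → Bool) → Bool) (x : ι → Bool) :
    ∑ α, walsh f α * chi x α = sg (f x) := by
  have key : ∑ α, walsh f α * chi x α =
      (2 ^ Fintype.card ι : ℝ)⁻¹ *
        ∑ y, sg (f y) * ∑ α : ι → Bool, chi α y * chi α x := by
    simp_rw [walsh_eq, mul_assoc, Finset.sum_mul, ← Finset.mul_sum]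
    congr 1
    rw [Finset.sum_comm]
    refine Finset.sum_congr rfl fun y _ => ?_
    simp only [chi_comm y, chi_comm x, mul_assoc]
    rw [← Finset.mul_sum]
  rw [key]
  simp_rw [sum_chi_mul_chi, mul_ite, mul_zero]
  rw [Finset.sum_ite_eq' univ x]
  have h2 : (2 : ℝ) ^ Fintype.card ι ≠ 0 := by positivity
  simp only [Finset.mem_univ, if_true]
  field_simp

lemma card_fun_bool : Fintype.card (ι → Bool) = 2 ^ Fintype.card ι := by
  simp [Fintype.card_pi]

lemma parseval (f : (ι → Bool) → Bool) : ∑ α, (walsh f α) ^ 2 = 1 := by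
  have h1 : ∀ α : ι → Bool, walsh f α ^ 2 =
      (2 ^ Fintype.card ι : ℝ)⁻¹ * ∑ x, sg (f x) * chi x α * walsh f α := by
    intro α
    rw [pow_two]
    nth_rewrite 1 [walsh_eq]
    rw [mul_assoc, Finset.sum_mul]
  simp_rw [h1]
  rw [← Finset.mul_sum, Finset.sum_comm]
  have h2 : ∀ x : ι → Bool, ∑ α, sg (f x) * chi x α * walsh f α = 1 := by
    intro x
    have : ∑ α, sg (f x) * chi x α * walsh f α
        = sg (f x) * ∑ α, walsh f α * chi x α := by
      rw [Finset.mul_sum]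
      exact Finset.sum_congr rfl fun α _ => by ring
    rw [this, sum_walsh_chi, sg_mul_self]
  simp_rw [h2]
  rw [Finset.sum_const, Finset.card_univ, card_fun_bool]
  have h3 : (2 : ℝ) ^ Fintype.card ι ≠ 0 := by positivity
  push_cast
  field_simp
  simp

lemma walsh_sq_le_one (f : (ι → Bool) → Bool) (α : ι → Bool) : (walsh f α) ^ 2 ≤ 1 := by
  rw [← parseval f]
  exact Finset.single_le_sum (f := fun β => (walsh f β) ^ 2)
    (fun β _ => sq_nonneg _) (Finset.mem_univ α)

lemma balanced_walsh_false (f : (ι → Bool) → Bool) (hb : balanced f)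
    (hc : 0 < Fintype.card ι) : walsh f (fun _ => false) = 0 := by
  rw [walsh_eq]
  have hchi : ∀ x : ι → Bool, chi x (fun _ => false) = 1 := by
    intro x; unfold chi; simp [sg]
  simp_rw [hchi, mul_one]
  have hcard : (univ.filter fun x : ι → Bool => f x = true).card
      + (univ.filter fun x : ι → Bool => ¬f x = true).card = 2 ^ Fintype.card ι := by
    rw [Finset.card_filter_add_card_filter_not, Finset.card_univ, card_fun_bool]
  have hpow : 2 ^ Fintype.card ι = 2 * 2 ^ (Fintype.card ι - 1) := by
    rw [← pow_succ']
    congr 1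
    omega
  have hb' := hb
  unfold balanced at hb'
  have h2 : (univ.filter fun x : ι → Bool => ¬f x = true).card
      = 2 ^ (Fintype.card ι - 1) := by omega
  have e1 : ∑ x ∈ univ.filter (fun x : ι → Bool => f x = true), sg (f x)
      = -(2 : ℝ) ^ (Fintype.card ι - 1) := by
    have hcon : ∀ x ∈ univ.filter (fun x : ι → Bool => f x = true),
        sg (f x) = (-1 : ℝ) := fun x hx => by
      rw [Finset.mem_filter] at hx
      rw [hx.2]; rfl
    rw [Finset.sum_congr rfl hcon, Finset.sum_const, hb']
    simp
  have e2 : ∑ x ∈ univ.filter (fun x : ι → Bool => ¬f x = true), sg (f x)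
      = (2 : ℝ) ^ (Fintype.card ι - 1) := by
    have hcon : ∀ x ∈ univ.filter (fun x : ι → Bool => ¬f x = true),
        sg (f x) = (1 : ℝ) := fun x hx => by
      rw [Finset.mem_filter] at hx
      have : f x = false := by
        cases hfx : f x
        · rfl
        · exact absurd hfx hx.2
      rw [this]; rfl
    rw [Finset.sum_congr rfl hcon, Finset.sum_const, h2]
    simp
  rw [← Finset.sum_filter_add_sum_filter_not univ (fun x : ι → Bool => f x = true),
    e1, e2]
  simp

lemma sg_not_and (a c : Bool) : sg (!a && c) = sg c * sg (a && c) := by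
  cases a <;> cases c <;> norm_num [sg]

lemma chi_update (x β : ι → Bool) (i : ι) :
    chi (Function.update x i (!x i)) β = sg (β i) * chi x β := by
  unfold chi
  rw [← Finset.mul_prod_erase univ _ (Finset.mem_univ i),
    ← Finset.mul_prod_erase univ (fun j => sg (x j && β j)) (Finset.mem_univ i)]
  have herase : ∏ j ∈ univ.erase i, sg ((Function.update x i (!x i)) j && β j)
      = ∏ j ∈ univ.erase i, sg (x j && β j) :=
    Finset.prod_congr rfl fun j hj => by
      rw [Function.update_of_ne (Finset.ne_of_mem_erase hj)]
  rw [herase, Function.update_self, sg_not_and]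
  ring

lemma sg_mul_sg (a b : Bool) : sg a * sg b = if a = b then (1 : ℝ) else -1 := by
  cases a <;> cases b <;> norm_num [sg]

lemma count_flip (f : (ι → Bool) → Bool) (i : ι) :
    ((univ.filter fun x : ι → Bool =>
        ¬f x = f (Function.update x i (!x i))).card : ℝ)
      = 2 ^ Fintype.card ι *
          ∑ α, (if α i = true then (1 : ℝ) else 0) * walsh f α ^ 2 := by
  classical
  have hcard : (univ.filter fun x : ι → Bool =>
        f x = f (Function.update x i (!x i))).card
      + (univ.filter fun x : ι → Bool =>
        ¬f x = f (Function.update x i (!x i))).card = 2 ^ Fintype.card ι := by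
    rw [Finset.card_filter_add_card_filter_not, Finset.card_univ, card_fun_bool]
  have hA : ∑ x : ι → Bool, sg (f x) * sg (f (Function.update x i (!x i)))
      = 2 ^ Fintype.card ι
        - 2 * ((univ.filter fun x : ι → Bool =>
            ¬f x = f (Function.update x i (!x i))).card : ℝ) := by
    simp_rw [sg_mul_sg]
    rw [← Finset.sum_filter_add_sum_filter_not univ
      (fun x : ι → Bool => f x = f (Function.update x i (!x i)))]
    have hcon1 : ∀ x ∈ univ.filter
        (fun x : ι → Bool => f x = f (Function.update x i (!x i))),
        (if f x = f (Function.update x i (!x i)) then (1:ℝ) else -1) = 1 :=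
      fun x hx => if_pos (Finset.mem_filter.mp hx).2
    have hcon2 : ∀ x ∈ univ.filter
        (fun x : ι → Bool => ¬f x = f (Function.update x i (!x i))),
        (if f x = f (Function.update x i (!x i)) then (1:ℝ) else -1) = -1 :=
      fun x hx => if_neg (Finset.mem_filter.mp hx).2
    rw [Finset.sum_congr rfl hcon1, Finset.sum_congr rfl hcon2,
      Finset.sum_const, Finset.sum_const]
    have hc := congrArg (fun m : ℕ => (m : ℝ)) hcard
    push_cast at hc ⊢
    simp only [nsmul_eq_mul, mul_one, mul_neg]
    push_cast
    linarith
  have hB : ∑ x : ι → Bool, sg (f x) * sg (f (Function.update x i (!x i)))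
      = 2 ^ Fintype.card ι * ∑ α, sg (α i) * walsh f α ^ 2 := by
    have hx : ∀ x : ι → Bool, sg (f x) * sg (f (Function.update x i (!x i))) =
        ∑ α : ι → Bool, ∑ β : ι → Bool,
          walsh f α * walsh f β * sg (β i) * (chi x α * chi x β) := by
      intro x
      rw [← sum_walsh_chi f x, ← sum_walsh_chi f (Function.update x i (!x i)),
        Finset.sum_mul_sum]
      refine Finset.sum_congr rfl fun α _ => Finset.sum_congr rfl fun β _ => ?_
      rw [chi_update]
      ring
    simp_rw [hx]
    rw [Finset.sum_comm, Finset.mul_sum]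
    refine Finset.sum_congr rfl fun α _ => ?_
    rw [Finset.sum_comm]
    have hin : ∀ β : ι → Bool,
        ∑ x : ι → Bool, walsh f α * walsh f β * sg (β i) * (chi x α * chi x β)
        = walsh f α * walsh f β * sg (β i) * ∑ x : ι → Bool, chi x α * chi x β := by
      intro β; rw [Finset.mul_sum]
    simp_rw [hin, sum_chi_mul_chi, mul_ite, mul_zero]
    rw [Finset.sum_ite_eq univ α
      (fun β => walsh f α * walsh f β * sg (β i) * 2 ^ Fintype.card ι)]
    simp only [Finset.mem_univ, if_true]
    ring
  have hp := parseval f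
  have hsg : ∀ α : ι → Bool, (1 - sg (α i)) * walsh f α ^ 2
      = 2 * ((if α i = true then (1:ℝ) else 0) * walsh f α ^ 2) := by
    intro α
    cases h : α i <;> simp only [sg, h, if_true, if_false] <;> norm_num <;> ring
  have hsub : ∑ α, (1 - sg (α i)) * walsh f α ^ 2
      = ∑ α, walsh f α ^ 2 - ∑ α, sg (α i) * walsh f α ^ 2 := by
    rw [← Finset.sum_sub_distrib]
    exact Finset.sum_congr rfl fun α _ => by ring
  have h2 : ∑ α, (1 - sg (α i)) * walsh f α ^ 2
      = 2 * ∑ α, (if α i = true then (1:ℝ) else 0) * walsh f α ^ 2 := by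
    rw [Finset.sum_congr rfl fun α _ => hsg α, ← Finset.mul_sum]
  have hAB := hA.symm.trans hB
  have e : (2:ℝ) ^ Fintype.card ι * (1 - ∑ α, sg (α i) * walsh f α ^ 2)
      = 2 ^ Fintype.card ι * (2 * ∑ α, (if α i = true then (1:ℝ) else 0) * walsh f α ^ 2) := by
    rw [← h2, hsub, hp]
  rw [mul_sub, mul_one] at e
  have e2 : (2:ℝ) ^ Fintype.card ι *
      (2 * ∑ α, (if α i = true then (1:ℝ) else 0) * walsh f α ^ 2)
      = 2 * (2 ^ Fintype.card ι *
        ∑ α, (if α i = true then (1:ℝ) else 0) * walsh f α ^ 2) := by ring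
  linarith

lemma bwt_cast (α : ι → Bool) :
    (bwt α : ℝ) = ∑ i, (if α i = true then (1 : ℝ) else 0) := by
  unfold bwt
  rw [Finset.card_filter]
  push_cast
  rfl

lemma influence_eq (f : (ι → Bool) → Bool) :
    influence f = ∑ α, (bwt α : ℝ) * walsh f α ^ 2 := by
  unfold influence
  simp only [ne_eq]
  have hcf : ∀ i : ι, ((univ.filter fun x : ι → Bool =>
        ¬f x = f (Function.update x i (!x i))).card : ℝ) / 2 ^ Fintype.card ι
      = ∑ α, (if α i = true then (1 : ℝ) else 0) * walsh f α ^ 2 := by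
    intro i
    rw [count_flip]
    have h2 : (2:ℝ) ^ Fintype.card ι ≠ 0 := by positivity
    field_simp
  rw [Finset.sum_congr rfl fun i _ => hcf i, Finset.sum_comm]
  refine Finset.sum_congr rfl fun α _ => ?_
  rw [← Finset.sum_mul, ← bwt_cast]

def negEquiv {ι : Type*} : (ι → Bool) ≃ (ι → Bool) where
  toFun x := fun i => !x i
  invFun x := fun i => !x i
  left_inv x := by funext i; simp
  right_inv x := by funext i; simp

lemma chi_neg (y γ' : ι → Bool) :
    chi (fun i => !y i) γ' = (∏ i, sg (γ' i)) * chi y γ' := by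
  unfold chi
  rw [← Finset.prod_mul_distrib]
  exact Finset.prod_congr rfl fun i _ => sg_not_and _ _

lemma sum_sg_neg (g : (ι → Bool) → Bool) (γ' : ι → Bool) :
    ∑ x' : ι → Bool, sg (g fun i => !x' i) * chi x' γ'
      = (∏ i, sg (γ' i)) * (2 ^ Fintype.card ι * walsh g γ') := by
  rw [← Equiv.sum_comp (negEquiv (ι := ι))
    (fun x' => sg (g fun i => !x' i) * chi x' γ')]
  have hterm : ∀ y : ι → Bool,
      sg (g fun i => !(negEquiv y) i) * chi (negEquiv y) γ'
        = (∏ i, sg (γ' i)) * (sg (g y) * chi y γ') := by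
    intro y
    have h1 : (fun i => !(negEquiv y) i) = y := by
      funext i; simp [negEquiv]
    have h2 : chi (negEquiv y) γ' = (∏ i, sg (γ' i)) * chi y γ' := chi_neg y γ'
    rw [h1, h2]
    ring
  rw [Finset.sum_congr rfl fun y _ => hterm y, ← Finset.mul_sum, sum_sg_chi]

lemma bwt_eq_sum (α : ι → Bool) : bwt α = ∑ i, b2n (α i) := by
  unfold bwt
  rw [Finset.card_filter]
  exact Finset.sum_congr rfl fun i _ => by cases α i <;> simp [b2n]

lemma prod_sg_eq (α : ι → Bool) : ∏ i, sg (α i) = (-1 : ℝ) ^ (bwt α) := by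
  rw [bwt_eq_sum, ← Finset.prod_pow_eq_pow_sum]
  exact Finset.prod_congr rfl fun i _ => (neg_one_pow_b2n _).symm

section Palin

variable {n : ℕ}

lemma bwt_cons (γ0 : Bool) (γ' : Fin n → Bool) :
    bwt (Fin.cons γ0 γ') = b2n γ0 + bwt γ' := by
  rw [bwt_eq_sum, bwt_eq_sum, Fin.sum_univ_succ]
  simp [Fin.cons_zero, Fin.cons_succ]

lemma consEquiv_eq (p : Bool × (Fin n → Bool)) :
    (Fin.consEquiv fun _ => Bool) p = Fin.cons p.1 p.2 := rfl

lemma palin_walsh (g : (Fin n → Bool) → Bool) (b : Bool) (γ0 : Bool)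
    (γ' : Fin n → Bool) :
    walsh (palin g b) (Fin.cons γ0 γ') =
      walsh g γ' * ((1 + sg γ0 * sg b * ∏ i, sg (γ' i)) / 2) := by
  rw [walsh_eq]
  rw [← Equiv.sum_comp (Fin.consEquiv fun _ => Bool)
    (fun x => sg (palin g b x) * chi x (Fin.cons γ0 γ'))]
  rw [Fintype.sum_prod_type, Fintype.sum_bool]
  have hterm : ∀ (x0 : Bool) (x' : Fin n → Bool),
      sg (palin g b (Fin.cons x0 x')) * chi (Fin.cons x0 x') (Fin.cons γ0 γ')
      = (if x0 then sg b * sg (g fun i => !x' i) else sg (g x'))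
          * (sg (x0 && γ0) * chi x' γ') := by
    intro x0 x'
    have hchi : chi (Fin.cons x0 x') (Fin.cons γ0 γ') = sg (x0 && γ0) * chi x' γ' := by
      unfold chi
      rw [Fin.prod_univ_succ]
      simp [Fin.cons_zero, Fin.cons_succ]
    have hp : palin g b (Fin.cons x0 x') = if x0 then xor b (g fun i => !x' i) else g x' := by
      unfold palin
      cases x0 <;> simp [Fin.cons_zero, Fin.cons_succ]
    rw [hchi, hp]
    cases x0 <;> simp [sg_xor]
  simp only [consEquiv_eq]
  rw [Finset.sum_congr rfl fun x' _ => hterm true x',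
    Finset.sum_congr rfl fun x' _ => hterm false x']
  simp only [if_true, if_false, Bool.true_and, Bool.false_and,
    Bool.false_eq_true, ite_false, ite_true]
  have e1 : ∑ x' : Fin n → Bool, sg b * sg (g fun i => !x' i) * (sg γ0 * chi x' γ')
      = sg b * sg γ0 * ((∏ i, sg (γ' i)) * (2 ^ n * walsh g γ')) := by
    have : ∀ x' : Fin n → Bool, sg b * sg (g fun i => !x' i) * (sg γ0 * chi x' γ')
        = (sg b * sg γ0) * (sg (g fun i => !x' i) * chi x' γ') := fun x' => by ring
    rw [Finset.sum_congr rfl fun x' _ => this x', ← Finset.mul_sum, sum_sg_neg]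
    simp [Fintype.card_fin]
  have e2 : ∑ x' : Fin n → Bool, sg (g x') * (sg false * chi x' γ')
      = 2 ^ n * walsh g γ' := by
    have : ∀ x' : Fin n → Bool, sg (g x') * (sg false * chi x' γ')
        = sg (g x') * chi x' γ' := fun x' => by simp [sg]
    rw [Finset.sum_congr rfl fun x' _ => this x', sum_sg_chi]
    simp [Fintype.card_fin]
  rw [e1, e2]
  have hcard : Fintype.card (Fin (n + 1)) = n + 1 := Fintype.card_fin _
  rw [hcard]
  have h2 : (2:ℝ) ^ (n+1) = 2 * 2 ^ n := by ring
  have h2n : (2:ℝ) ^ n ≠ 0 := by positivity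
  rw [h2]
  field_simp
  ring

lemma palin_walsh' (g : (Fin n → Bool) → Bool) (b : Bool) (γ0 : Bool)
    (γ' : Fin n → Bool) :
    walsh (palin g b) (Fin.cons γ0 γ') =
      if (b2n γ0 + b2n b + bwt γ') % 2 = 0 then walsh g γ' else 0 := by
  rw [palin_walsh]
  have hsg : sg γ0 * sg b * ∏ i, sg (γ' i)
      = (-1 : ℝ) ^ (b2n γ0 + b2n b + bwt γ') := by
    rw [prod_sg_eq, ← neg_one_pow_b2n γ0, ← neg_one_pow_b2n b, ← pow_add, ← pow_add]
  rw [hsg]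
  rcases Nat.even_or_odd (b2n γ0 + b2n b + bwt γ') with he | ho
  · rw [he.neg_one_pow, if_pos (Nat.even_iff.mp he)]
    ring
  · rw [ho.neg_one_pow, if_neg (by
      have := Nat.odd_iff.mp ho
      omega)]
    ring

lemma influence_palin (hn : 0 < n) (g : (Fin n → Bool) → Bool) (b : Bool) :
    influence (palin g b) = influence g + eps g b := by
  rw [influence_eq, influence_eq]
  rw [← Equiv.sum_comp (Fin.consEquiv fun _ => Bool)
    (fun γ => (bwt γ : ℝ) * walsh (palin g b) γ ^ 2)]
  rw [Fintype.sum_prod_type, Fintype.sum_bool]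
  simp only [consEquiv_eq]
  have hterm : ∀ (γ0 : Bool) (γ' : Fin n → Bool),
      (bwt (Fin.cons γ0 γ') : ℝ) * walsh (palin g b) (Fin.cons γ0 γ') ^ 2
      = (b2n γ0 + bwt γ' : ℝ) *
          (if (b2n γ0 + b2n b + bwt γ') % 2 = 0 then walsh g γ' ^ 2 else 0) := by
    intro γ0 γ'
    rw [bwt_cons, palin_walsh']
    push_cast
    split_ifs <;> simp
  rw [Finset.sum_congr rfl fun γ' _ => hterm true γ',
    Finset.sum_congr rfl fun γ' _ => hterm false γ', ← Finset.sum_add_distrib]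
  unfold eps
  rw [Finset.sum_filter, ← Finset.sum_add_distrib]
  refine Finset.sum_congr rfl fun γ' _ => ?_
  by_cases h : bwt γ' % 2 = b2n b
  · rw [if_neg (by simp [b2n]; rcases b <;> simp [b2n] at h ⊢ <;> omega),
      if_pos (by rcases b <;> simp [b2n] at h ⊢ <;> omega),
      if_neg (by simpa using h)]
    simp [b2n]
  · rw [if_pos (by rcases b <;> simp [b2n] at h ⊢ <;> omega),
      if_neg (by rcases b <;> simp [b2n] at h ⊢ <;> omega),
      if_pos (by simpa using h)]
    simp [b2n]
    ring

end Palin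

section Comp

variable {κ : Type*} [Fintype κ] [DecidableEq κ]

/-- block support of `α : ι × κ → Bool` -/
def blockSupp (α : ι × κ → Bool) : ι → Bool :=
  fun i => decide (∃ j, α (i, j) = true)

lemma blockSupp_true_iff (α : ι × κ → Bool) (i : ι) :
    blockSupp α i = true ↔ (fun j => α (i, j)) ≠ (fun _ => false) := by
  unfold blockSupp
  rw [decide_eq_true_iff]
  constructor
  · rintro ⟨j, hj⟩ h
    have := congrFun h j
    simp [hj] at this
  · intro h
    by_contra hc
    push_neg at hc
    exact h (funext fun j => by
      cases hj : α (i, j)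
      · rfl
      · exact absurd hj (hc j))

lemma blockSupp_false (α : ι × κ → Bool) (i : ι)
    (h : blockSupp α i = false) : (fun j => α (i, j)) = (fun _ => false) := by
  have hne : ¬∃ j, α (i, j) = true := by
    intro hex
    have : blockSupp α i = true := by
      unfold blockSupp
      exact decide_eq_true hex
    rw [h] at this
    exact Bool.false_ne_true this
  funext j
  cases hj : α (i, j)
  · rfl
  · exact absurd ⟨j, hj⟩ hne

lemma uncurry_eq (A : ι → κ → Bool) :
    ((Equiv.curry ι κ Bool).symm A) = fun p : ι × κ => A p.1 p.2 := rfl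

lemma disjComp_walsh (f : (ι → Bool) → Bool) (g : (κ → Bool) → Bool)
    (hg0 : walsh g (fun _ => false) = 0) (α : ι × κ → Bool) :
    walsh (disjComp f g) α = walsh f (blockSupp α) *
      ∏ i, (if (fun j => α (i, j)) = (fun _ => false) then 1
        else walsh g fun j => α (i, j)) := by
  rw [walsh_eq]
  rw [← Equiv.sum_comp (Equiv.curry ι κ Bool).symm
    (fun x => sg (disjComp f g x) * chi x α)]
  have hterm : ∀ A : ι → κ → Bool,
      sg (disjComp f g ((Equiv.curry ι κ Bool).symm A)) *
        chi ((Equiv.curry ι κ Bool).symm A) α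
      = ∑ β : ι → Bool, walsh f β *
          ∏ i, (sg (g (A i) && β i) * ∏ j, sg (A i j && α (i, j))) := by
    intro A
    have h1 : disjComp f g ((Equiv.curry ι κ Bool).symm A)
        = f (fun i => g (A i)) := rfl
    have h2 : chi ((Equiv.curry ι κ Bool).symm A) α
        = ∏ i, ∏ j, sg (A i j && α (i, j)) := by
      unfold chi
      rw [uncurry_eq A, Fintype.prod_prod_type]
    rw [h1, h2, ← sum_walsh_chi f (fun i => g (A i)), Finset.sum_mul]
    refine Finset.sum_congr rfl fun β _ => ?_
    rw [mul_assoc]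
    congr 1
    unfold chi
    rw [← Finset.prod_mul_distrib]
  rw [Finset.sum_congr rfl fun A _ => hterm A, Finset.sum_comm]
  have hinner : ∀ β : ι → Bool,
      ∑ A : ι → κ → Bool, walsh f β *
          ∏ i, (sg (g (A i) && β i) * ∏ j, sg (A i j && α (i, j)))
      = walsh f β * ∏ i, ∑ z : κ → Bool,
          (sg (g z && β i) * ∏ j, sg (z j && α (i, j))) := by
    intro β
    rw [← Finset.mul_sum]
    congr 1
    exact sum_prod_eq fun i z => sg (g z && β i) * ∏ j, sg (z j && α (i, j))
  rw [Finset.sum_congr rfl fun β _ => hinner β]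
  have hz : ∀ (β : ι → Bool) (i : ι),
      ∑ z : κ → Bool, (sg (g z && β i) * ∏ j, sg (z j && α (i, j)))
      = 2 ^ Fintype.card κ *
          (if β i then walsh g (fun j => α (i, j))
            else (if (fun j => α (i, j)) = (fun _ => false) then 1 else 0)) := by
    intro β i
    cases hb : β i
    · have : ∀ z : κ → Bool, sg (g z && false) * ∏ j, sg (z j && α (i, j))
          = chi z (fun j => α (i, j)) := by
        intro z
        unfold chi
        simp [sg]
      rw [Finset.sum_congr rfl fun z _ => this z, sum_chi]
      simp only [Bool.false_eq_true, if_false]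
      split_ifs <;> simp
    · have : ∀ z : κ → Bool, sg (g z && true) * ∏ j, sg (z j && α (i, j))
          = sg (g z) * chi z (fun j => α (i, j)) := by
        intro z
        unfold chi
        simp
      rw [Finset.sum_congr rfl fun z _ => this z, sum_sg_chi]
      simp
  have hprod : ∀ β : ι → Bool,
      walsh f β * ∏ i, ∑ z : κ → Bool,
          (sg (g z && β i) * ∏ j, sg (z j && α (i, j)))
      = 2 ^ Fintype.card (ι × κ) * (walsh f β *
          ∏ i, (if β i then walsh g (fun j => α (i, j))
            else (if (fun j => α (i, j)) = (fun _ => false) then 1 else 0))) := by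
    intro β
    rw [Finset.prod_congr rfl fun i _ => hz β i, Finset.prod_mul_distrib,
      Finset.prod_const, Finset.card_univ, Fintype.card_prod]
    rw [← pow_mul, mul_comm (Fintype.card κ) (Fintype.card ι)]
    ring
  rw [Finset.sum_congr rfl fun β _ => hprod β, ← Finset.mul_sum]
  have hpow : ((2 : ℝ) ^ Fintype.card (ι × κ))⁻¹ * 2 ^ Fintype.card (ι × κ) = 1 := by
    have : (2:ℝ) ^ Fintype.card (ι × κ) ≠ 0 := by positivity
    field_simp
  rw [← mul_assoc, hpow, one_mul]
  rw [Finset.sum_eq_single (blockSupp α)]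
  · congr 1
    refine Finset.prod_congr rfl fun i _ => ?_
    cases hb : blockSupp α i
    · have h0 := blockSupp_false α i hb
      rw [if_pos h0, if_pos h0]
      simp
    · have hne := (blockSupp_true_iff α i).mp hb
      rw [if_neg hne, if_neg hne]
      simp
  · intro β _ hβ
    obtain ⟨i, hi⟩ : ∃ i, β i ≠ blockSupp α i := by
      by_contra hc
      push_neg at hc
      exact hβ (funext hc)
    refine mul_eq_zero_of_right _ (Finset.prod_eq_zero (Finset.mem_univ i) ?_)
    cases hb : β i
    · rw [hb] at hi
      have hbs : blockSupp α i = true := by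
        cases hbs : blockSupp α i
        · simp [hbs] at hi
        · rfl
      have hne := (blockSupp_true_iff α i).mp hbs
      simp only [Bool.false_eq_true, if_false]
      exact if_neg hne
    · rw [hb] at hi
      have hbs : blockSupp α i = false := by
        cases hbs : blockSupp α i
        · rfl
        · simp [hbs] at hi
      have h0 := blockSupp_false α i hbs
      rw [if_pos rfl, h0]
      exact hg0
  · intro h
    exact absurd (Finset.mem_univ _) h

noncomputable def qfun (g : (κ → Bool) → Bool) (c : Bool) (z : κ → Bool) : ℝ :=
  if c then walsh g z ^ 2 else (if z = (fun _ => false) then 1 else 0)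

lemma disjComp_walsh_sq (f : (ι → Bool) → Bool) (g : (κ → Bool) → Bool)
    (hg0 : walsh g (fun _ => false) = 0) (α : ι × κ → Bool) :
    walsh (disjComp f g) α ^ 2
      = ∑ β : ι → Bool, walsh f β ^ 2 * ∏ i, qfun g (β i) (fun j => α (i, j)) := by
  have hsum : ∑ β : ι → Bool, walsh f β ^ 2 * ∏ i, qfun g (β i) (fun j => α (i, j))
      = walsh f (blockSupp α) ^ 2 *
        ∏ i, (if (fun j => α (i, j)) = (fun _ => false) then 1
          else walsh g (fun j => α (i, j))) ^ 2 := by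
    rw [Finset.sum_eq_single (blockSupp α)]
    · congr 1
      refine Finset.prod_congr rfl fun i _ => ?_
      unfold qfun
      cases hb : blockSupp α i
      · have h0 := blockSupp_false α i hb
        rw [if_pos h0, if_pos h0]
        simp
      · have hne := (blockSupp_true_iff α i).mp hb
        rw [if_neg hne, if_neg hne]
        simp
    · intro β _ hβ
      obtain ⟨i, hi⟩ : ∃ i, β i ≠ blockSupp α i := by
        by_contra hc; push_neg at hc; exact hβ (funext hc)
      refine mul_eq_zero_of_right _ (Finset.prod_eq_zero (Finset.mem_univ i) ?_)
      unfold qfun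
      cases hb : β i
      · rw [hb] at hi
        have hbs : blockSupp α i = true := by
          cases hbs : blockSupp α i
          · simp [hbs] at hi
          · rfl
        have hne := (blockSupp_true_iff α i).mp hbs
        simp only [Bool.false_eq_true, if_false]
        exact if_neg hne
      · rw [hb] at hi
        have hbs : blockSupp α i = false := by
          cases hbs : blockSupp α i
          · rfl
          · simp [hbs] at hi
        have h0 := blockSupp_false α i hbs
        rw [if_pos rfl, h0, hg0]
        simp
    · intro h; exact absurd (Finset.mem_univ _) h
  rw [disjComp_walsh f g hg0, mul_pow, ← Finset.prod_pow, hsum]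

lemma q_sum (g : (κ → Bool) → Bool) (c : Bool) :
    ∑ z : κ → Bool, qfun g c z = 1 := by
  unfold qfun
  cases c
  · simp only [Bool.false_eq_true, if_false]
    rw [Finset.sum_ite_eq' univ (fun _ => false) (fun _ => (1 : ℝ))]
    simp
  · simp only [if_true]
    exact parseval g

lemma bwt_zero : bwt (fun _ : κ => false) = 0 := by
  unfold bwt
  simp

lemma q_weighted (g : (κ → Bool) → Bool) (c : Bool) :
    ∑ z : κ → Bool, (bwt z : ℝ) * qfun g c z
      = if c then influence g else 0 := by
  unfold qfun
  cases c
  · simp only [Bool.false_eq_true, if_false]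
    simp_rw [mul_ite, mul_one, mul_zero]
    rw [Finset.sum_ite_eq' univ (fun _ => false) (fun z => (bwt z : ℝ))]
    simp [bwt_zero]
  · simp only [if_true]
    exact (influence_eq g).symm

lemma sum_A_weighted (g : (κ → Bool) → Bool) (β : ι → Bool) (i0 : ι) :
    ∑ A : ι → κ → Bool, (bwt (A i0) : ℝ) * ∏ i, qfun g (β i) (A i)
      = if β i0 then influence g else 0 := by
  have hA : ∀ A : ι → κ → Bool, (bwt (A i0) : ℝ) * ∏ i, qfun g (β i) (A i)
      = ∏ i, ((if i = i0 then (bwt (A i) : ℝ) else 1) * qfun g (β i) (A i)) := by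
    intro A
    rw [Finset.prod_mul_distrib, Finset.prod_ite_eq' univ i0 (fun i => (bwt (A i) : ℝ))]
    simp
  rw [Finset.sum_congr rfl fun A _ => hA A,
    sum_prod_eq (fun i z => (if i = i0 then (bwt z : ℝ) else 1) * qfun g (β i) z)]
  rw [Finset.prod_eq_single i0]
  · rw [Finset.sum_congr rfl fun z (_ : z ∈ univ) => by rw [if_pos rfl]]
    exact q_weighted g (β i0)
  · intro i _ hi
    rw [Finset.sum_congr rfl fun z (_ : z ∈ univ) => by rw [if_neg hi, one_mul]]
    exact q_sum g (β i)
  · intro h; exact absurd (Finset.mem_univ _) h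

lemma sum_i0_beta (v : ℝ) (β : ι → Bool) :
    ∑ i0 : ι, (if β i0 then v else 0) = (bwt β : ℝ) * v := by
  rw [bwt_cast, Finset.sum_mul]
  refine Finset.sum_congr rfl fun i _ => ?_
  cases h : β i <;> simp [h]

lemma influence_comp (f : (ι → Bool) → Bool) (g : (κ → Bool) → Bool)
    (hg0 : walsh g (fun _ => false) = 0) :
    influence (disjComp f g) = influence f * influence g := by
  rw [influence_eq (disjComp f g),
    ← Equiv.sum_comp (Equiv.curry ι κ Bool).symm
      (fun α => (bwt α : ℝ) * walsh (disjComp f g) α ^ 2)]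
  have hbwtA : ∀ A : ι → κ → Bool,
      (bwt ((Equiv.curry ι κ Bool).symm A) : ℝ) = ∑ i0, (bwt (A i0) : ℝ) := by
    intro A
    rw [bwt_eq_sum, Fintype.sum_prod_type]
    push_cast
    refine Finset.sum_congr rfl fun i _ => ?_
    rw [bwt_eq_sum]
    push_cast
    rfl
  have hterm : ∀ A : ι → κ → Bool,
      (bwt ((Equiv.curry ι κ Bool).symm A) : ℝ) *
          walsh (disjComp f g) ((Equiv.curry ι κ Bool).symm A) ^ 2
      = ∑ i0 : ι, ∑ β : ι → Bool,
          walsh f β ^ 2 * ((bwt (A i0) : ℝ) * ∏ i, qfun g (β i) (A i)) := by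
    intro A
    rw [hbwtA A, disjComp_walsh_sq f g hg0]
    have hcur : ∀ i : ι, (fun j => ((Equiv.curry ι κ Bool).symm A) (i, j)) = A i :=
      fun i => rfl
    simp only [hcur]
    rw [Finset.sum_mul_sum]
    exact Finset.sum_congr rfl fun i0 _ => Finset.sum_congr rfl fun β _ => by ring
  rw [Finset.sum_congr rfl fun A _ => hterm A, Finset.sum_comm]
  have houter : ∀ i0 : ι,
      ∑ A : ι → κ → Bool, ∑ β : ι → Bool,
          walsh f β ^ 2 * ((bwt (A i0) : ℝ) * ∏ i, qfun g (β i) (A i))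
      = ∑ β : ι → Bool, walsh f β ^ 2 * (if β i0 then influence g else 0) := by
    intro i0
    rw [Finset.sum_comm]
    refine Finset.sum_congr rfl fun β _ => ?_
    rw [← Finset.mul_sum, sum_A_weighted g β i0]
  rw [Finset.sum_congr rfl fun i0 _ => houter i0, Finset.sum_comm]
  have hβ : ∀ β : ι → Bool,
      ∑ i0 : ι, walsh f β ^ 2 * (if β i0 then influence g else 0)
      = (bwt β : ℝ) * walsh f β ^ 2 * influence g := by
    intro β
    rw [← Finset.mul_sum, sum_i0_beta]
    ring
  rw [Finset.sum_congr rfl fun β _ => hβ β, influence_eq f, Finset.sum_mul]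

end Comp

lemma inf_lower (f : (ι → Bool) → Bool) (w : ℕ)
    (hw : ∀ α, walsh f α ≠ 0 → w ≤ bwt α) : (w : ℝ) ≤ influence f := by
  rw [influence_eq]
  calc (w : ℝ) = ∑ α, (w : ℝ) * walsh f α ^ 2 := by
        rw [← Finset.mul_sum, parseval, mul_one]
    _ ≤ ∑ α, (bwt α : ℝ) * walsh f α ^ 2 := by
        refine Finset.sum_le_sum fun α _ => ?_
        by_cases h : walsh f α = 0
        · simp [h]
        · exact mul_le_mul_of_nonneg_right (by exact_mod_cast hw α h) (sq_nonneg _)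

lemma eps_nonneg {n : ℕ} (g : (Fin n → Bool) → Bool) (b : Bool) : 0 ≤ eps g b := by
  unfold eps
  exact Finset.sum_nonneg fun α _ => sq_nonneg _

end S15

open S15

/-- Amplification criterion: under the hypotheses of the plateaued resilient case,
`H_∞(G_b)/Inf(G_b) ≥ H_∞(g)/Inf(g)` if and only if `t + 3 ≥ Inf(g) + ε_b(g)`. -/
theorem stmt15 {n : ℕ} (hn : 0 < n) (g : (Fin n → Bool) → Bool) (hg : balanced g)
    (b : Bool) (t : ℕ) (hparity : t % 2 = b2n b) (hplat : plateaued g)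
    (hres : resilient g t) (hnres : ¬resilient g (t + 1)) :
    minEntropy (disjComp (palin g b) g) / influence (disjComp (palin g b) g) ≥
        minEntropy g / influence g ↔
      (t + 3 : ℝ) ≥ influence g + eps g b := by
  classical
  obtain ⟨c, hc⟩ := hplat
  unfold resilient at hnres
  push_neg at hnres
  obtain ⟨α0, hα0le, hα0ne⟩ := hnres
  have hα0wt : bwt α0 = t + 1 := by
    have h1 : ¬bwt α0 ≤ t := fun h => hα0ne (hres α0 h)
    omega
  set K : ℝ := walsh g α0 ^ 2 with hK
  have hK0 : 0 < K := lt_of_le_of_ne (sq_nonneg _) (Ne.symm (pow_ne_zero 2 hα0ne))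
  have hK1 : K ≤ 1 := walsh_sq_le_one g α0
  have hsq_c : ∀ β, walsh g β ≠ 0 → walsh g β ^ 2 = c ^ 2 := by
    intro β hβ
    rcases hc β with h | h | h
    · exact absurd h hβ
    · rw [h]
    · rw [h]; ring
  have hKall : ∀ β, walsh g β ≠ 0 → walsh g β ^ 2 = K := by
    intro β hβ
    rw [hsq_c β hβ, hK, hsq_c α0 hα0ne]
  have hcardn : 0 < Fintype.card (Fin n) := by simpa using hn
  have hg0 : walsh g (fun _ => false) = 0 := balanced_walsh_false g hg hcardn
  have P1 : ∀ γ : Fin (n+1) → Bool, walsh (palin g b) γ ≠ 0 →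
      walsh (palin g b) γ ^ 2 = K ∧ t + 2 ≤ bwt γ := by
    intro γ hγ
    have hγeq : Fin.cons (γ 0) (Fin.tail γ) = γ := Fin.cons_self_tail γ
    rw [← hγeq, palin_walsh'] at hγ
    rw [← hγeq, palin_walsh']
    by_cases hcond : (b2n (γ 0) + b2n b + bwt (Fin.tail γ)) % 2 = 0
    · rw [if_pos hcond] at hγ ⊢
      have htail : t + 1 ≤ bwt (Fin.tail γ) := by
        have h1 : ¬bwt (Fin.tail γ) ≤ t := fun h => hγ (hres _ h)
        omega
      refine ⟨hKall _ hγ, ?_⟩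
      have hbw := bwt_cons (γ 0) (Fin.tail γ)
      have hb2 : b2n (γ 0) ≤ 1 := by cases γ 0 <;> simp [b2n]
      have hbb : b2n b = t % 2 := hparity.symm
      have hbb' : b2n b ≤ 1 := by cases b <;> simp [b2n]
      omega
    · rw [if_neg hcond] at hγ
      exact absurd rfl hγ
  have hbsg : b2n b = t % 2 := hparity.symm
  have P2cond : (b2n true + b2n b + bwt α0) % 2 = 0 := by
    rw [hα0wt, hbsg]
    simp [b2n]
    omega
  have P2 : walsh (palin g b) (Fin.cons true α0) = walsh g α0 := by
    rw [palin_walsh', if_pos P2cond]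
  have P2wt : bwt (Fin.cons true α0) = t + 2 := by
    rw [bwt_cons, hα0wt]
    simp only [b2n, if_true]
    omega
  have P2ne : walsh (palin g b) (Fin.cons true α0) ≠ 0 := by rw [P2]; exact hα0ne
  set γs : Fin (n + 1) → Bool := Fin.cons true α0 with hγs
  set G := disjComp (palin g b) g with hG
  have G1 : ∀ α : Fin (n+1) × Fin n → Bool, walsh G α ≠ 0 →
      ∃ m : ℕ, t + 2 ≤ m ∧ walsh G α ^ 2 = K ^ (1 + m) := by
    intro α hα
    rw [hG, disjComp_walsh (palin g b) g hg0] at hα ⊢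
    have hfne : walsh (palin g b) (blockSupp α) ≠ 0 := fun h => hα (by rw [h, zero_mul])
    have hpne : (∏ i, (if (fun j => α (i, j)) = (fun _ => false) then 1
        else walsh g fun j => α (i, j))) ≠ 0 := fun h => hα (by rw [h, mul_zero])
    obtain ⟨hsq, hwt⟩ := P1 (blockSupp α) hfne
    refine ⟨bwt (blockSupp α), hwt, ?_⟩
    rw [mul_pow, hsq, pow_add, pow_one]
    congr 1
    rw [← Finset.prod_pow]
    have hfac : ∀ i : Fin (n+1), (if (fun j => α (i, j)) = (fun _ => false) then (1:ℝ)
        else walsh g fun j => α (i, j)) ^ 2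
        = (if blockSupp α i = true then K else 1) := by
      intro i
      cases hb' : blockSupp α i
      · rw [if_pos (blockSupp_false α i hb'), if_neg (by simp)]
        norm_num
      · have hne := (blockSupp_true_iff α i).mp hb'
        rw [if_neg hne, if_pos rfl]
        refine hKall _ ?_
        intro h0
        refine hpne (Finset.prod_eq_zero (Finset.mem_univ i) ?_)
        rw [if_neg hne, h0]
    rw [Finset.prod_congr rfl fun i _ => hfac i]
    rw [← Finset.prod_filter_mul_prod_filter_not univ (fun i => blockSupp α i = true)]
    rw [Finset.prod_congr rfl (fun i hi => if_pos (Finset.mem_filter.mp hi).2),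
      Finset.prod_congr rfl (fun i hi => if_neg (Finset.mem_filter.mp hi).2),
      Finset.prod_const, Finset.prod_const, one_pow, mul_one]
    rfl
  obtain ⟨j0, hj0⟩ : ∃ j, α0 j = true := by
    have hpos : 0 < bwt α0 := by omega
    unfold bwt at hpos
    obtain ⟨j, hj⟩ := Finset.card_pos.mp hpos
    exact ⟨j, (Finset.mem_filter.mp hj).2⟩
  have hα0nef : α0 ≠ (fun _ => false) := by
    intro h
    rw [h] at hj0
    exact Bool.false_ne_true hj0
  set A : Fin (n+1) × Fin n → Bool :=
    fun p => (γs : Fin (n+1) → Bool) p.1 && α0 p.2 with hA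
  have hAi : ∀ i : Fin (n+1), (fun j => A (i, j))
      = if γs i = true then α0 else (fun _ => false) := by
    intro i
    funext j
    rw [hA]
    cases hgi : γs i <;> simp [hgi]
  have hBSA : blockSupp A = γs := by
    funext i
    unfold blockSupp
    cases hgi : γs i
    · rw [decide_eq_false_iff_not]
      rintro ⟨j, hj⟩
      rw [hA] at hj
      simp [hgi] at hj
    · simp only [decide_eq_true_eq]; exact ⟨j0, by rw [hA]; simp [hgi, hj0]⟩
  have hGA : walsh G A = walsh g α0 * walsh g α0 ^ (t + 2) := by
    rw [hG, disjComp_walsh (palin g b) g hg0, hBSA, P2]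
    congr 1
    have hfac : ∀ i : Fin (n+1), (if (fun j => A (i, j)) = (fun _ => false) then (1:ℝ)
        else walsh g fun j => A (i, j))
        = (if γs i = true then walsh g α0 else 1) := by
      intro i
      rw [hAi i]
      cases hgi : γs i
      · simp
      · simp [hα0nef]
    rw [Finset.prod_congr rfl fun i _ => hfac i]
    rw [← Finset.prod_filter_mul_prod_filter_not univ (fun i => γs i = true)]
    rw [Finset.prod_congr rfl (fun i hi => if_pos (Finset.mem_filter.mp hi).2),
      Finset.prod_congr rfl (fun i hi => if_neg (Finset.mem_filter.mp hi).2),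
      Finset.prod_const, Finset.prod_const, one_pow, mul_one]
    have hcount : (univ.filter fun i => γs i = true).card = t + 2 := P2wt
    rw [hcount]
  have hGAne : walsh G A ≠ 0 := by
    rw [hGA]
    exact mul_ne_zero hα0ne (pow_ne_zero _ hα0ne)
  have hGAsq : walsh G A ^ 2 = K ^ (t + 3) := by
    have hh : walsh G A ^ 2 = (walsh g α0 ^ 2) ^ (t + 3) := by
      rw [hGA]
      ring
    rw [hh, ← hK]
  set L : ℝ := Real.logb 2 (1 / K) with hL
  have hLnn : 0 ≤ L := by
    apply Real.logb_nonneg (by norm_num)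
    rw [le_div_iff₀ hK0, one_mul]
    exact hK1
  have hlog : ∀ m : ℕ, Real.logb 2 (1 / K ^ m) = m * L := by
    intro m
    rw [hL, one_div, one_div, ← inv_pow, Real.logb_pow]
  have hMEg : minEntropy g = L := by
    unfold minEntropy
    have hset : {y : ℝ | ∃ α, walsh g α ≠ 0 ∧ y = Real.logb 2 (1 / walsh g α ^ 2)}
        = {L} := by
      ext y
      simp only [Set.mem_setOf_eq, Set.mem_singleton_iff]
      constructor
      · rintro ⟨β, hβ, rfl⟩
        rw [hKall β hβ, hL]
      · rintro rfl
        exact ⟨α0, hα0ne, by rw [hKall α0 hα0ne, hL]⟩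
    rw [hset, csInf_singleton]
  have hMEG : minEntropy G = (t + 3 : ℝ) * L := by
    unfold minEntropy
    apply IsLeast.csInf_eq
    constructor
    · refine ⟨A, hGAne, ?_⟩
      rw [hGAsq, hlog]
      push_cast
      ring
    · rintro y ⟨α, hα, rfl⟩
      obtain ⟨m, hm, hsq⟩ := G1 α hα
      rw [hsq, hlog]
      have hle : (t + 3 : ℝ) ≤ ((1 + m : ℕ) : ℝ) := by
        push_cast
        have : (t : ℝ) + 2 ≤ m := by exact_mod_cast hm
        linarith
      exact mul_le_mul_of_nonneg_right hle hLnn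
  have hIg1 : (t + 1 : ℝ) ≤ influence g := by
    have h := inf_lower g (t + 1) (fun α hα => by
      have h1 : ¬bwt α ≤ t := fun h => hα (hres α h)
      omega)
    push_cast at h
    linarith
  have hIpos : 0 < influence g := by
    have h0 : (0:ℝ) < t + 1 := by positivity
    linarith
  have hEnn : 0 ≤ eps g b := eps_nonneg g b
  have hIG : influence G = (influence g + eps g b) * influence g := by
    rw [hG, influence_comp (palin g b) g hg0, influence_palin hn g b]
  rw [hMEg, hMEG, hIG]
  by_cases hL0 : L = 0
  · have hK1' : K = 1 := by
      have h1K : (1:ℝ) / K = 1 := by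
        refine Real.eq_one_of_pos_of_logb_eq_zero (b := 2) (by norm_num) ?_ ?_
        · positivity
        · rw [← hL]; exact hL0
      field_simp at h1K
      linarith
    have huniq : ∀ γ : Fin (n+1) → Bool, γ ≠ γs →
        walsh (palin g b) γ = 0 := by
      intro γ hγ
      by_contra hne
      have h1 := (P1 γ hne).1
      have hp := parseval (palin g b)
      have hsplit : ∑ γ' : Fin (n+1) → Bool, walsh (palin g b) γ' ^ 2
          = walsh (palin g b) (γs) ^ 2
            + ∑ γ' ∈ univ.erase (γs), walsh (palin g b) γ' ^ 2 :=
        (Finset.add_sum_erase univ (fun γ' => walsh (palin g b) γ' ^ 2)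
          (Finset.mem_univ _)).symm
      have hmem : γ ∈ univ.erase (γs) :=
        Finset.mem_erase.mpr ⟨hγ, Finset.mem_univ γ⟩
      have hle : walsh (palin g b) γ ^ 2
          ≤ ∑ γ' ∈ univ.erase (γs), walsh (palin g b) γ' ^ 2 :=
        Finset.single_le_sum (f := fun γ' => walsh (palin g b) γ' ^ 2)
          (fun γ' _ => sq_nonneg _) hmem
      have hc2 : walsh (palin g b) (γs) ^ 2 = K := (P1 _ P2ne).1
      rw [hp] at hsplit
      rw [h1, hK1'] at hle
      rw [hc2, hK1'] at hsplit
      linarith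
    have hIgb : influence (palin g b) = t + 2 := by
      rw [influence_eq]
      rw [Finset.sum_eq_single (γs)]
      · rw [(P1 _ P2ne).1, hK1', P2wt]
        push_cast
        ring
      · intro γ _ hγ
        rw [huniq γ hγ]
        ring
      · intro h; exact absurd (Finset.mem_univ _) h
    have hIE : influence g + eps g b = t + 2 := by
      rw [← influence_palin hn g b, hIgb]
    constructor
    · intro _
      rw [hIE]
      linarith
    · intro _
      rw [hL0]
      simp
  · have hLpos : 0 < L := lt_of_le_of_ne hLnn (Ne.symm hL0)
    have hIEpos : 0 < influence g + eps g b := by linarith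
    rw [ge_iff_le, ge_iff_le, div_le_div_iff₀ hIpos (mul_pos hIEpos hIpos)]
    constructor
    · intro h
      nlinarith [h, mul_pos hLpos hIpos]
    · intro h
      nlinarith [h, mul_pos hLpos hIpos, mul_nonneg hLnn hIpos.le]
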